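/- arXiv:2504.14697 — 7 statements merged into one kernel-verified Lean document; each statement's English description precedes it below -/
import Mathlib

section
/- Let A be a d×d real symmetric matrix with eigenvalues λ₁ ≥ ⋯ ≥ λ_d, satisfying λ₁ = λ₂ = λ₃ = λ > 0 and |λ_d| ≤ λ. Let {e_i} be an orthonormal eigenbasis with Ae_i = λ_i e_i, and for x ∈ S^{d-1} write x_i = ⟨x, e_i⟩. Then for all x, y ∈ S^{d-1}: Σ_{i=1}^{3} [2λ(1 - x_i² - y_i²) - ⟨Ax,y⟩(2 - x_i² - y_i² - 2x_i y_i)] ≥ 0. -/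
/-!
Over the top eigendirections `T` write `s = ⟪A x, y⟫`, `u = ∑_T (xᵢ² + yᵢ²)` and
`a = ∑_T (xᵢ - yᵢ)²`; the sum is then `2λ(|T| - u) - s(2|T| - 2u + a)`. All eigenvalues lie in
`[-λ, λ]` and those on `T` equal `λ`, so expanding `s` in the eigenbasis gives `s ≤ λ - λa/2`.
For `s > 0` what remains is `(2 - a)(2|T| - 2u + a) ≤ 4(|T| - u)`, i.e.
`a(2u + 2 - 2|T| - a) ≤ 0`, which holds because `u ≤ 2` by Bessel and `|T| ≥ 3`.
-/

open scoped RealInnerProductSpace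

lemma mul_mul_le_of_abs_le {c l a b : ℝ} (hc : |c| ≤ l) : c * a * b ≤ l / 2 * (a ^ 2 + b ^ 2) := by
  obtain ⟨hc₁, hc₂⟩ := abs_le.mp hc
  nlinarith [mul_nonneg (sub_nonneg.mpr hc₂) (sq_nonneg (a + b)),
    mul_nonneg (neg_le_iff_add_nonneg.mp hc₁) (sq_nonneg (a - b))]

lemma two_mul_sub_mul_nonneg {k u a s l : ℝ} (hl : 0 ≤ l) (hu : u ≤ k - 1) (ha : 0 ≤ a)
    (hs : s ≤ l - l / 2 * a) : 0 ≤ 2 * l * (k - u) - s * (2 * k - 2 * u + a) := by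
  have hpos : 0 ≤ 2 * k - 2 * u + a := by linarith
  rcases le_or_gt s 0 with hs₀ | hs₀
  · nlinarith [mul_nonneg (neg_nonneg.mpr hs₀) hpos]
  · nlinarith [mul_le_mul_of_nonneg_right hs hpos,
      mul_nonneg (mul_nonneg hl ha) (by linarith : 0 ≤ 2 * k - 2 - 2 * u + a)]

namespace OrthonormalBasis

variable {ι E : Type*} [Fintype ι] [NormedAddCommGroup E] [InnerProductSpace ℝ E]
  (b : OrthonormalBasis ι ℝ E) {A : E →ₗ[ℝ] E} {lam : ι → ℝ}

lemma sum_sq_inner_le (s : Finset ι) (x : E) : ∑ i ∈ s, ⟪x, b i⟫ ^ 2 ≤ ‖x‖ ^ 2 :=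
  (Finset.sum_le_univ_sum_of_nonneg fun _ => sq_nonneg _).trans_eq (b.sum_sq_inner_left x)

lemma inner_apply_eq_sum_of_apply_eq_smul (heig : ∀ i, A (b i) = lam i • b i) (x y : E) :
    ⟪A x, y⟫ = ∑ i, lam i * ⟪x, b i⟫ * ⟪y, b i⟫ := by
  conv_lhs => rw [← b.sum_repr' x]
  simp only [map_sum, map_smul, heig, sum_inner, real_inner_smul_left]
  refine Finset.sum_congr rfl fun i _ => ?_
  rw [real_inner_comm x, real_inner_comm y]
  ring

lemma inner_apply_le_of_abs_le (heig : ∀ i, A (b i) = lam i • b i) {l : ℝ}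
    (hbound : ∀ i, |lam i| ≤ l) {T : Finset ι} (hT : ∀ i ∈ T, lam i = l) (x y : E) :
    ⟪A x, y⟫ ≤ l / 2 * (‖x‖ ^ 2 + ‖y‖ ^ 2) - l / 2 * ∑ i ∈ T, (⟪x, b i⟫ - ⟪y, b i⟫) ^ 2 := by
  classical
  have hterm : ∀ i, lam i * ⟪x, b i⟫ * ⟪y, b i⟫ ≤ l / 2 * (⟪x, b i⟫ ^ 2 + ⟪y, b i⟫ ^ 2)
      - if i ∈ T then l / 2 * (⟪x, b i⟫ - ⟪y, b i⟫) ^ 2 else 0 := by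
    intro i
    split_ifs with hi
    · rw [hT i hi]
      linarith [sq_nonneg (⟪x, b i⟫ - ⟪y, b i⟫)]
    · rw [sub_zero]
      exact mul_mul_le_of_abs_le (hbound i)
  calc ⟪A x, y⟫ = ∑ i, lam i * ⟪x, b i⟫ * ⟪y, b i⟫ :=
        b.inner_apply_eq_sum_of_apply_eq_smul heig x y
    _ ≤ _ := Finset.sum_le_sum fun i _ => hterm i
    _ = _ := by
      rw [Finset.sum_sub_distrib, Fintype.sum_ite_mem, ← Finset.mul_sum, ← Finset.mul_sum,
        Finset.sum_add_distrib, b.sum_sq_inner_left, b.sum_sq_inner_left]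

theorem sum_nonneg_of_top_eigenvalues (heig : ∀ i, A (b i) = lam i • b i) {l : ℝ}
    (hbound : ∀ i, |lam i| ≤ l) {T : Finset ι} (hT : ∀ i ∈ T, lam i = l) (hcard : 3 ≤ T.card)
    {x y : E} (hx : ‖x‖ = 1) (hy : ‖y‖ = 1) :
    0 ≤ ∑ i ∈ T, (2 * l * (1 - ⟪x, b i⟫ ^ 2 - ⟪y, b i⟫ ^ 2)
          - ⟪A x, y⟫ * (2 - ⟪x, b i⟫ ^ 2 - ⟪y, b i⟫ ^ 2 - 2 * ⟪x, b i⟫ * ⟪y, b i⟫)) := by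
  set s := ⟪A x, y⟫
  set u := ∑ i ∈ T, (⟪x, b i⟫ ^ 2 + ⟪y, b i⟫ ^ 2)
  set a := ∑ i ∈ T, (⟪x, b i⟫ - ⟪y, b i⟫) ^ 2
  have hsum : ∑ i ∈ T, (2 * l * (1 - ⟪x, b i⟫ ^ 2 - ⟪y, b i⟫ ^ 2)
      - s * (2 - ⟪x, b i⟫ ^ 2 - ⟪y, b i⟫ ^ 2 - 2 * ⟪x, b i⟫ * ⟪y, b i⟫))
        = 2 * l * (T.card - u) - s * (2 * T.card - 2 * u + a) := by
    have hterm : ∀ i, 2 * l * (1 - ⟪x, b i⟫ ^ 2 - ⟪y, b i⟫ ^ 2)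
        - s * (2 - ⟪x, b i⟫ ^ 2 - ⟪y, b i⟫ ^ 2 - 2 * ⟪x, b i⟫ * ⟪y, b i⟫)
          = (2 * l - 2 * s) - (2 * l - 2 * s) * (⟪x, b i⟫ ^ 2 + ⟪y, b i⟫ ^ 2)
            - s * (⟪x, b i⟫ - ⟪y, b i⟫) ^ 2 := fun i => by ring
    rw [Finset.sum_congr rfl fun i _ => hterm i, Finset.sum_sub_distrib, Finset.sum_sub_distrib,
      Finset.sum_const, ← Finset.mul_sum, ← Finset.mul_sum, nsmul_eq_mul]
    ring
  have hl : 0 ≤ l := by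
    obtain ⟨i, -⟩ := Finset.card_pos.mp (by omega : 0 < T.card)
    exact (abs_nonneg _).trans (hbound i)
  have hu : u ≤ 2 := by
    have hxT := b.sum_sq_inner_le T x
    have hyT := b.sum_sq_inner_le T y
    rw [hx, one_pow] at hxT
    rw [hy, one_pow] at hyT
    simp only [u, Finset.sum_add_distrib]
    linarith
  have hs : s ≤ l - l / 2 * a := by
    have := b.inner_apply_le_of_abs_le heig hbound hT x y
    rw [hx, hy] at this
    linarith
  have hk : (3 : ℝ) ≤ T.card := by exact_mod_cast hcard
  rw [hsum]
  exact two_mul_sub_mul_nonneg hl (by linarith) (Finset.sum_nonneg fun i _ => sq_nonneg _) hs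

end OrthonormalBasis

/-- pointwise positivity of the summed second-variation quantity for the top
three eigendirections of a symmetric matrix `A` with `λ₁ = λ₂ = λ₃ = λ > 0` and
`λ₁ ≥ ⋯ ≥ λ_d`, `|λ_d| ≤ λ`. -/
theorem stmt2 {d : ℕ} (hd : 3 ≤ d)
    (A : EuclideanSpace ℝ (Fin d) →ₗ[ℝ] EuclideanSpace ℝ (Fin d))
    (b : OrthonormalBasis (Fin d) ℝ (EuclideanSpace ℝ (Fin d)))
    (lam : Fin d → ℝ) (heig : ∀ i, A (b i) = lam i • b i)
    (hmono : ∀ i j : Fin d, i ≤ j → lam j ≤ lam i)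
    (l : ℝ)
    (h0 : lam ⟨0, by omega⟩ = l) (h1 : lam ⟨1, by omega⟩ = l)
    (h2 : lam ⟨2, by omega⟩ = l)
    (hlast : |lam ⟨d - 1, by omega⟩| ≤ l)
    (x y : EuclideanSpace ℝ (Fin d)) (hx : ‖x‖ = 1) (hy : ‖y‖ = 1) :
    0 ≤ ∑ i ∈ ({⟨0, by omega⟩, ⟨1, by omega⟩, ⟨2, by omega⟩} : Finset (Fin d)),
        (2 * l * (1 - ⟪x, b i⟫ ^ 2 - ⟪y, b i⟫ ^ 2)
          - ⟪A x, y⟫ * (2 - ⟪x, b i⟫ ^ 2 - ⟪y, b i⟫ ^ 2 - 2 * ⟪x, b i⟫ * ⟪y, b i⟫)) := by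
  have hbound : ∀ i, |lam i| ≤ l := fun i => abs_le.mpr
    ⟨(abs_le.mp hlast).1.trans (hmono i _ (Fin.le_def.mpr (Nat.le_sub_one_of_lt i.isLt))),
      h0 ▸ hmono _ i (Fin.le_def.mpr (Nat.zero_le _))⟩
  refine b.sum_nonneg_of_top_eigenvalues heig hbound ?_ ?_ hx hy
  · simp only [Finset.mem_insert, Finset.mem_singleton]
    rintro i (rfl | rfl | rfl) <;> assumption
  · exact (Finset.card_eq_three.mpr ⟨_, _, _, by simp, by simp, by simp, rfl⟩).ge
end

section
/- Let μ be a probability measure on the unit sphere S^{d-1} supported in a spherical cap S_α^+(U) = {x : ⟨x,U⟩ ≥ cos α} with U ∈ S^{d-1} and α ∈ (0, π/2). Let φ' : R → R be a positive continuous function and A a d×d real symmetric matrix. If Y[μ](x) := ∫ P_x[y] φ'(⟨Ax,y⟩) dμ(y) satisfies ∫ ‖Y[μ](x)‖² dμ(x) = 0, then μ is a Dirac point mass δ_{x₀} for some x₀ ∈ S_α^+(U). -/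
/-!
Since `∫ ‖Y[μ]‖² dμ = 0`, the field `Y[μ]` vanishes `μ`-a.e., so pairing it with `U` gives
`∫∫ φ'(⟪Ax, y⟫) ⟪U, P_x[y]⟫ dμ(y) dμ(x) = 0`. As `A` is symmetric, the integrand symmetrized in
`(x, y)` is `φ'(⟪Ax, y⟫) (⟪x, U⟫ + ⟪y, U⟫) (1 - ⟪x, y⟫)`, which on the cap (where `cos α > 0`) is
nonnegative and vanishes only on the diagonal. Hence `μ ⊗ μ` is carried by the diagonal, and `μ`
is a Dirac mass.
-/

open MeasureTheory
open scoped RealInnerProductSpace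

section MeasureLemmas

variable {X : Type*} [MeasurableSpace X]

theorem ContinuousOn.integrable_of_ae_mem_compact [TopologicalSpace X] [T2Space X]
    [OpensMeasurableSpace X] {F : Type*} [NormedAddCommGroup F] {μ : Measure X}
    [IsFiniteMeasureOnCompacts μ] {K : Set X} {f : X → F} (hf : ContinuousOn f K)
    (hK : IsCompact K) (hμK : ∀ᵐ x ∂μ, x ∈ K) : Integrable f μ := by
  rw [← Measure.restrict_eq_self_of_ae_mem hμK]
  exact hf.integrableOn_compact hK

theorem continuous_integral_of_ae_mem_compact {W Y F : Type*} [TopologicalSpace W]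
    [FirstCountableTopology W] [LocallyCompactSpace W] [TopologicalSpace Y] [MeasurableSpace Y]
    [OpensMeasurableSpace Y] [NormedAddCommGroup F] [NormedSpace ℝ F]
    [SecondCountableTopologyEither Y F] {μ : Measure Y} [IsLocallyFiniteMeasure μ]
    {K : Set Y} {f : W → Y → F} (hf : Continuous (Function.uncurry f)) (hK : IsCompact K)
    (hμK : ∀ᵐ y ∂μ, y ∈ K) : Continuous fun x => ∫ y, f x y ∂μ := by
  rw [← Measure.restrict_eq_self_of_ae_mem hμK]
  exact continuous_parametric_integral_of_continuous hf hK

theorem MeasureTheory.Measure.ae_mem_prod {μ : Measure X} [SFinite μ] {Y : Type*}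
    [MeasurableSpace Y] {ν : Measure Y} [SFinite ν] {s : Set X} {t : Set Y} (hs : ∀ᵐ x ∂μ, x ∈ s)
    (ht : ∀ᵐ y ∂ν, y ∈ t) : ∀ᵐ p ∂μ.prod ν, p ∈ s ×ˢ t :=
  (Measure.quasiMeasurePreserving_fst.ae hs).and (Measure.quasiMeasurePreserving_snd.ae ht)

theorem ae_add_swap_eq_zero_of_integral_eq_zero {μ : Measure X} [SFinite μ] {g : X × X → ℝ}
    (hg : Integrable g (μ.prod μ)) (h0 : ∫ p, g p ∂μ.prod μ = 0)
    (hpos : ∀ᵐ p ∂μ.prod μ, 0 ≤ g p + g p.swap) :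
    ∀ᵐ p ∂μ.prod μ, g p + g p.swap = 0 := by
  have hsum : ∫ p, (g p + g p.swap) ∂μ.prod μ = 0 := by
    rw [integral_add hg (hg.swap : Integrable (fun p => g p.swap) _), integral_prod_swap, h0,
      add_zero]
  exact (integral_eq_zero_iff_of_nonneg_ae hpos (hg.add hg.swap)).1 hsum

theorem exists_eq_dirac_of_ae_prod_eq [MeasurableSingletonClass X] {μ : Measure X}
    [IsProbabilityMeasure μ] {K : Set X} (hμK : ∀ᵐ x ∂μ, x ∈ K)
    (hdiag : ∀ᵐ p ∂μ.prod μ, p.1 = p.2) : ∃ x₀ ∈ K, μ = Measure.dirac x₀ := by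
  obtain ⟨x₀, hx₀K, hx₀⟩ := (hμK.and (Measure.ae_ae_of_ae_prod hdiag)).exists
  have hrestrict : μ.restrict {x₀} = μ :=
    Measure.restrict_eq_self_of_ae_mem (hx₀.mono fun y hy => hy.symm)
  refine ⟨x₀, hx₀K, ?_⟩
  calc μ = μ.restrict {x₀} := hrestrict.symm
    _ = μ {x₀} • Measure.dirac x₀ := Measure.restrict_singleton μ x₀
    _ = Measure.dirac x₀ := by
      rw [← Measure.restrict_apply_univ, hrestrict, measure_univ, one_smul]

end MeasureLemmas

section SphereDynamics

variable {E : Type*} [NormedAddCommGroup E] [InnerProductSpace ℝ E]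

def tangentProj (x y : E) : E := y - ⟪x, y⟫ • x

theorem inner_tangentProj_add_inner_tangentProj (U x y : E) :
    ⟪U, tangentProj x y⟫ + ⟪U, tangentProj y x⟫ = (⟪x, U⟫ + ⟪y, U⟫) * (1 - ⟪x, y⟫) := by
  simp only [tangentProj, inner_sub_right, real_inner_smul_right, real_inner_comm U,
    real_inner_comm x y]
  ring

def sphericalCap (U : E) (α : ℝ) : Set E := {x | ‖x‖ = 1 ∧ Real.cos α ≤ ⟪x, U⟫}

theorem isCompact_sphericalCap [ProperSpace E] (U : E) (α : ℝ) :
    IsCompact (sphericalCap U α) :=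
  (isCompact_sphere (0 : E) 1).of_isClosed_subset
    (((isClosed_eq continuous_norm continuous_const).inter
      (isClosed_le continuous_const (continuous_id.inner continuous_const))) :
        IsClosed ({x : E | ‖x‖ = 1} ∩ {x | Real.cos α ≤ ⟪x, U⟫}))
    fun _ hx => mem_sphere_zero_iff_norm.2 hx.1

theorem inner_add_inner_pos_of_mem_sphericalCap {U x y : E} {α : ℝ} (hα : 0 < Real.cos α)
    (hx : x ∈ sphericalCap U α) (hy : y ∈ sphericalCap U α) : 0 < ⟪x, U⟫ + ⟪y, U⟫ := by
  linarith [hx.2, hy.2]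

theorem real_inner_le_one_of_mem_sphericalCap {U x y : E} {α : ℝ}
    (hx : x ∈ sphericalCap U α) (hy : y ∈ sphericalCap U α) : ⟪x, y⟫ ≤ 1 := by
  simpa [hx.1, hy.1] using real_inner_le_norm x y

def interactionKernel (ψ : ℝ → ℝ) (A : E →ₗ[ℝ] E) (x y : E) : E :=
  ψ ⟪A x, y⟫ • tangentProj x y

noncomputable def interactionField [MeasurableSpace E] (μ : Measure E) (ψ : ℝ → ℝ)
    (A : E →ₗ[ℝ] E) (x : E) : E :=
  ∫ y, interactionKernel ψ A x y ∂μ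

theorem inner_interactionKernel_add_swap {A : E →ₗ[ℝ] E} (hA : A.IsSymmetric) (ψ : ℝ → ℝ)
    (U x y : E) :
    ⟪U, interactionKernel ψ A x y⟫ + ⟪U, interactionKernel ψ A y x⟫ =
      ψ ⟪A x, y⟫ * (⟪x, U⟫ + ⟪y, U⟫) * (1 - ⟪x, y⟫) := by
  have hAyx : ⟪A y, x⟫ = ⟪A x, y⟫ := by rw [hA, real_inner_comm]
  simp only [interactionKernel, real_inner_smul_right, hAyx, ← mul_add,
    inner_tangentProj_add_inner_tangentProj, mul_assoc]

theorem continuous_interactionKernel [FiniteDimensional ℝ E] {ψ : ℝ → ℝ} (hψ : Continuous ψ)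
    (A : E →ₗ[ℝ] E) : Continuous (Function.uncurry (interactionKernel ψ A)) := by
  have hA : Continuous A := A.continuous_of_finiteDimensional
  exact (hψ.comp ((hA.comp continuous_fst).inner continuous_snd)).smul
    (continuous_snd.sub ((continuous_fst.inner continuous_snd).smul continuous_fst))

variable [FiniteDimensional ℝ E] [MeasurableSpace E] [BorelSpace E] {μ : Measure E}
  [IsFiniteMeasure μ] {K : Set E} {ψ : ℝ → ℝ}

theorem interactionField_ae_eq_zero (hK : IsCompact K) (hμK : ∀ᵐ x ∂μ, x ∈ K)
    (hψ : Continuous ψ) (A : E →ₗ[ℝ] E)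
    (h : ∫ x, ‖interactionField μ ψ A x‖ ^ 2 ∂μ = 0) :
    ∀ᵐ x ∂μ, interactionField μ ψ A x = 0 := by
  have hcont : Continuous (interactionField μ ψ A) :=
    continuous_integral_of_ae_mem_compact (continuous_interactionKernel hψ A) hK hμK
  have hint : Integrable (fun x => ‖interactionField μ ψ A x‖ ^ 2) μ :=
    (hcont.norm.pow 2).continuousOn.integrable_of_ae_mem_compact hK hμK
  filter_upwards [(integral_eq_zero_iff_of_nonneg (fun x => by positivity) hint).1 h] with x hx
  simpa using hx

theorem integrable_inner_interactionKernel (hK : IsCompact K) (hμK : ∀ᵐ x ∂μ, x ∈ K)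
    (hψ : Continuous ψ) (A : E →ₗ[ℝ] E) (U : E) :
    Integrable (fun p : E × E => ⟪U, interactionKernel ψ A p.1 p.2⟫) (μ.prod μ) :=
  (continuous_const.inner (continuous_interactionKernel hψ A)).continuousOn
    |>.integrable_of_ae_mem_compact (hK.prod hK) (Measure.ae_mem_prod hμK hμK)

theorem integral_inner_interactionKernel_eq_zero (hK : IsCompact K) (hμK : ∀ᵐ x ∂μ, x ∈ K)
    (hψ : Continuous ψ) (A : E →ₗ[ℝ] E) (U : E)
    (hY : ∀ᵐ x ∂μ, interactionField μ ψ A x = 0) :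
    ∫ p, ⟪U, interactionKernel ψ A p.1 p.2⟫ ∂μ.prod μ = 0 := by
  rw [integral_prod _ (integrable_inner_interactionKernel hK hμK hψ A U)]
  refine integral_eq_zero_of_ae ?_
  filter_upwards [hY] with x hx
  have hkx : Integrable (interactionKernel ψ A x) μ :=
    ((continuous_interactionKernel hψ A).comp (Continuous.prodMk_right x)).continuousOn
      |>.integrable_of_ae_mem_compact hK hμK
  rw [integral_inner hkx U]
  change ⟪U, interactionField μ ψ A x⟫ = 0
  rw [hx, inner_zero_right]

theorem ae_prod_eq_of_integral_inner_interactionKernel_eq_zero {U : E} {α : ℝ}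
    (hα : 0 < Real.cos α) (hμK : ∀ᵐ x ∂μ, x ∈ sphericalCap U α) (hψpos : ∀ s, 0 < ψ s)
    (hψ : Continuous ψ) {A : E →ₗ[ℝ] E} (hA : A.IsSymmetric)
    (h0 : ∫ p, ⟪U, interactionKernel ψ A p.1 p.2⟫ ∂μ.prod μ = 0) :
    ∀ᵐ p ∂μ.prod μ, p.1 = p.2 := by
  have hcap := Measure.ae_mem_prod hμK hμK
  have hpos : ∀ p ∈ sphericalCap U α ×ˢ sphericalCap U α,
      0 < ψ ⟪A p.1, p.2⟫ * (⟪p.1, U⟫ + ⟪p.2, U⟫) ∧ 0 ≤ 1 - ⟪p.1, p.2⟫ := fun p hp =>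
    ⟨mul_pos (hψpos _) (inner_add_inner_pos_of_mem_sphericalCap hα hp.1 hp.2),
      sub_nonneg.2 (real_inner_le_one_of_mem_sphericalCap hp.1 hp.2)⟩
  have hnonneg : ∀ᵐ p ∂μ.prod μ,
      0 ≤ ⟪U, interactionKernel ψ A p.1 p.2⟫ + ⟪U, interactionKernel ψ A p.2 p.1⟫ := by
    filter_upwards [hcap] with p hp
    rw [inner_interactionKernel_add_swap hA]
    exact mul_nonneg (hpos p hp).1.le (hpos p hp).2
  have hsym := ae_add_swap_eq_zero_of_integral_eq_zero
    (integrable_inner_interactionKernel (isCompact_sphericalCap U α) hμK hψ A U) h0 hnonneg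
  filter_upwards [hsym, hcap] with p hp hpK
  rw [Prod.fst_swap, Prod.snd_swap, inner_interactionKernel_add_swap hA, mul_eq_zero,
    sub_eq_zero] at hp
  exact (inner_eq_one_iff_of_norm_eq_one hpK.1.1 hpK.2.1).1
    (hp.resolve_left (hpos p hpK).1.ne').symm

end SphereDynamics

theorem stmt5_general {d : ℕ} (μ : Measure (EuclideanSpace ℝ (Fin d))) [IsProbabilityMeasure μ]
    (U : EuclideanSpace ℝ (Fin d))
    (α : ℝ) (hα : α ∈ Set.Ioo 0 (Real.pi / 2))
    (hsupp : μ {x | ¬ (‖x‖ = 1 ∧ Real.cos α ≤ ⟪x, U⟫)} = 0)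
    (φ' : ℝ → ℝ) (hφpos : ∀ s, 0 < φ' s) (hφcont : Continuous φ')
    (A : EuclideanSpace ℝ (Fin d) →ₗ[ℝ] EuclideanSpace ℝ (Fin d))
    (hsymm : ∀ x y : EuclideanSpace ℝ (Fin d), ⟪A x, y⟫ = ⟪x, A y⟫)
    (hcrit : ∫ x, ‖∫ y, φ' ⟪A x, y⟫ • (y - ⟪x, y⟫ • x) ∂μ‖ ^ 2 ∂μ = 0) :
    ∃ x₀ : EuclideanSpace ℝ (Fin d),
      ‖x₀‖ = 1 ∧ Real.cos α ≤ ⟪x₀, U⟫ ∧ μ = Measure.dirac x₀ := by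
  have hcos : 0 < Real.cos α :=
    Real.cos_pos_of_mem_Ioo ⟨by linarith [hα.1, Real.pi_pos], hα.2⟩
  have hμK : ∀ᵐ x ∂μ, x ∈ sphericalCap U α := ae_iff.2 hsupp
  have hK := isCompact_sphericalCap U α
  have hY := interactionField_ae_eq_zero hK hμK hφcont A hcrit
  have hdiag := ae_prod_eq_of_integral_inner_interactionKernel_eq_zero hcos hμK hφpos hφcont
    hsymm (integral_inner_interactionKernel_eq_zero hK hμK hφcont A U hY)
  obtain ⟨x₀, hx₀, hμ⟩ := exists_eq_dirac_of_ae_prod_eq hμK hdiag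
  exact ⟨x₀, hx₀.1, hx₀.2, hμ⟩

/-- if a probability measure `μ` supported on a spherical cap
`S_α^+(U)` (with `α ∈ (0, π/2)`) has vanishing kinetic energy for the vector field
`Y[μ](x) = ∫ P_x[y] φ'(⟪Ax,y⟫) dμ(y)` with `φ' > 0` continuous and `A` symmetric,
then `μ` is a Dirac mass at a point of the cap. -/
theorem stmt5 {d : ℕ} (μ : Measure (EuclideanSpace ℝ (Fin d))) [IsProbabilityMeasure μ]
    (U : EuclideanSpace ℝ (Fin d)) (hU : ‖U‖ = 1)
    (α : ℝ) (hα : α ∈ Set.Ioo 0 (Real.pi / 2))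
    (hsupp : μ {x | ¬ (‖x‖ = 1 ∧ Real.cos α ≤ ⟪x, U⟫)} = 0)
    (φ' : ℝ → ℝ) (hφpos : ∀ s, 0 < φ' s) (hφcont : Continuous φ')
    (A : EuclideanSpace ℝ (Fin d) →ₗ[ℝ] EuclideanSpace ℝ (Fin d))
    (hsymm : ∀ x y : EuclideanSpace ℝ (Fin d), ⟪A x, y⟫ = ⟪x, A y⟫)
    (hcrit : ∫ x, ‖∫ y, φ' ⟪A x, y⟫ • (y - ⟪x, y⟫ • x) ∂μ‖ ^ 2 ∂μ = 0) :
    ∃ x₀ : EuclideanSpace ℝ (Fin d),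
      ‖x₀‖ = 1 ∧ Real.cos α ≤ ⟪x₀, U⟫ ∧ μ = Measure.dirac x₀ :=
  stmt5_general μ U α hα hsupp φ' hφpos hφcont A hsymm hcrit
end

section
/- Let S ⊆ S^{d-1} be a closed subset of the unit sphere with inf_{x,y ∈ S} ⟨x,y⟩ > √2/2. Then the geodesically convex hull Conv[S] (intersection of all closed geodesically convex subsets of S^{d-1} containing S) satisfies inf_{x,y ∈ S} ⟨x,y⟩ = inf_{x,y ∈ Conv[S]} ⟨x,y⟩. -/
set_option maxHeartbeats 1000000

open scoped RealInnerProductSpace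

/-- A subset `C` of the unit sphere is geodesically convex if it contains, for any two
of its points, every point of the minimizing geodesic (great-circle arc) between them,
characterized metrically: `z` lies on the minimizing geodesic from `x` to `y` iff
`arccos⟪x,z⟫ + arccos⟪z,y⟫ = arccos⟪x,y⟫`. -/
def GeodesicallyConvex {d : ℕ} (C : Set (EuclideanSpace ℝ (Fin d))) : Prop :=
  C ⊆ Metric.sphere 0 1 ∧
    ∀ x ∈ C, ∀ y ∈ C, ∀ z ∈ Metric.sphere (0 : EuclideanSpace ℝ (Fin d)) 1,
      Real.arccos ⟪x, z⟫ + Real.arccos ⟪z, y⟫ = Real.arccos ⟪x, y⟫ → z ∈ C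

/-- The geodesically convex hull: the intersection of all closed geodesically convex
subsets of the sphere containing `S`. -/
def GeodConv {d : ℕ} (S : Set (EuclideanSpace ℝ (Fin d))) : Set (EuclideanSpace ℝ (Fin d)) :=
  ⋂₀ {C | IsClosed C ∧ GeodesicallyConvex C ∧ S ⊆ C}


lemma cap_geod {E : Type*} [NormedAddCommGroup E] [InnerProductSpace ℝ E]
    {m : ℝ} (hm : 0 < m) {x a b z : E}
    (ha : ‖a‖ = 1) (hb : ‖b‖ = 1) (hz : ‖z‖ = 1)
    (hxa : m ≤ ⟪x, a⟫) (hxb : m ≤ ⟪x, b⟫)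
    (heq : Real.arccos ⟪a, z⟫ + Real.arccos ⟪z, b⟫ = Real.arccos ⟪a, b⟫) :
    m ≤ ⟪x, z⟫ := by
  have haz : |⟪a, z⟫| ≤ 1 := by
    simpa [ha, hz] using abs_real_inner_le_norm a z
  have hzb : |⟪z, b⟫| ≤ 1 := by
    simpa [hz, hb] using abs_real_inner_le_norm z b
  have hab : |⟪a, b⟫| ≤ 1 := by
    simpa [ha, hb] using abs_real_inner_le_norm a b
  rw [abs_le] at haz hzb hab
  set α := Real.arccos ⟪a, z⟫ with hα
  set β := Real.arccos ⟪z, b⟫ with hβ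
  have hca : Real.cos α = ⟪a, z⟫ := Real.cos_arccos haz.1 haz.2
  have hcb : Real.cos β = ⟪z, b⟫ := Real.cos_arccos hzb.1 hzb.2
  have hcab : Real.cos (α + β) = ⟪a, b⟫ := by rw [heq]; exact Real.cos_arccos hab.1 hab.2
  have hα0 : 0 ≤ α := Real.arccos_nonneg _
  have hβ0 : 0 ≤ β := Real.arccos_nonneg _
  have hαπ : α ≤ Real.pi := Real.arccos_le_pi _
  have hβπ : β ≤ Real.pi := Real.arccos_le_pi _
  have hsum : α + β ≤ Real.pi := heq ▸ Real.arccos_le_pi _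
  have hsa : 0 ≤ Real.sin α := Real.sin_nonneg_of_nonneg_of_le_pi hα0 hαπ
  have hsb : 0 ≤ Real.sin β := Real.sin_nonneg_of_nonneg_of_le_pi hβ0 hβπ
  rcases eq_or_lt_of_le hα0 with h0 | hαpos
  · -- α = 0 : z = a
    have : ⟪a, z⟫ = 1 := by rw [← hca, ← h0, Real.cos_zero]
    have : z = a := ((inner_eq_one_iff_of_norm_eq_one ha hz).mp this).symm
    rw [this]; exact hxa
  rcases eq_or_lt_of_le hβ0 with h0 | hβpos
  · have : ⟪z, b⟫ = 1 := by rw [← hcb, ← h0, Real.cos_zero]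
    have : z = b := (inner_eq_one_iff_of_norm_eq_one hz hb).mp this
    rw [this]; exact hxb
  rcases eq_or_lt_of_le hsum with h1 | hlt
  · -- α + β = π, so ⟪a,b⟫ = -1, b = -a, contradiction with m > 0
    exfalso
    have hab1 : ⟪a, b⟫ = -1 := by rw [← hcab, h1, Real.cos_pi]
    have : ‖a + b‖ ^ 2 = 0 := by
      rw [← real_inner_self_eq_norm_sq]
      rw [real_inner_add_add_self, real_inner_self_eq_norm_sq, real_inner_self_eq_norm_sq,
        ha, hb, hab1]
      ring
    have hab0 : a + b = 0 :=
      norm_eq_zero.mp (pow_eq_zero_iff (n := 2) (by norm_num) |>.mp this)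
    have h2 : ⟪x, a + b⟫ = (0 : ℝ) := by rw [hab0, inner_zero_right]
    rw [inner_add_right] at h2
    linarith
  · -- main case
    have hs : 0 < Real.sin (α + β) :=
      Real.sin_pos_of_pos_of_lt_pi (by linarith) hlt
    set s := Real.sin (α + β) with hsdef
    set v := Real.sin β • a + Real.sin α • b with hv
    have hvz : v = s • z := by
      have hnorm : ‖v - s • z‖ ^ 2 = 0 := by
        rw [← real_inner_self_eq_norm_sq]
        simp only [hv, inner_sub_left, inner_sub_right, inner_add_left, inner_add_right,
          real_inner_smul_left, real_inner_smul_right]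
        have e1 : ⟪b, a⟫ = Real.cos (α + β) := by rw [real_inner_comm, hcab]
        have e2 : ⟪z, a⟫ = Real.cos α := by rw [real_inner_comm, ← hca]
        have e3 : ⟪b, z⟫ = Real.cos β := by rw [real_inner_comm, ← hcb]
        rw [real_inner_self_eq_norm_sq a, real_inner_self_eq_norm_sq b,
          real_inner_self_eq_norm_sq z, ha, hb, hz, e1, e2, e3]
        rw [show ⟪a, b⟫ = Real.cos (α + β) from hcab.symm,
          show ⟪a, z⟫ = Real.cos α from hca.symm,
          show ⟪z, b⟫ = Real.cos β from hcb.symm]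
        rw [hsdef, Real.sin_add, Real.cos_add]
        nlinarith [Real.sin_sq_add_cos_sq α, Real.sin_sq_add_cos_sq β]
      have := norm_eq_zero.mp (pow_eq_zero_iff (n := 2) (by norm_num) |>.mp hnorm)
      exact sub_eq_zero.mp this
    have hinner : s * ⟪x, z⟫ = Real.sin β * ⟪x, a⟫ + Real.sin α * ⟪x, b⟫ := by
      have : ⟪x, v⟫ = ⟪x, s • z⟫ := by rw [hvz]
      simpa [hv, inner_add_right, real_inner_smul_right] using this.symm
    have hsab : s ≤ Real.sin α + Real.sin β := by
      rw [hsdef, Real.sin_add]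
      nlinarith [Real.cos_le_one α, Real.cos_le_one β,
        Real.neg_one_le_cos α, Real.neg_one_le_cos β]
    have h3 : m * (Real.sin α + Real.sin β)
        ≤ Real.sin β * ⟪x, a⟫ + Real.sin α * ⟪x, b⟫ := by
      nlinarith [mul_le_mul_of_nonneg_left hxa hsb, mul_le_mul_of_nonneg_left hxb hsa]
    have h4 : m * s ≤ m * (Real.sin α + Real.sin β) :=
      mul_le_mul_of_nonneg_left hsab hm.le
    by_contra hcon
    push_neg at hcon
    have h5 : s * ⟪x, z⟫ < s * m := mul_lt_mul_of_pos_left hcon hs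
    rw [hinner] at h5
    nlinarith

lemma caps_closed_convex {d : ℕ} (A : Set (EuclideanSpace ℝ (Fin d))) {m : ℝ} (hm : 0 < m) :
    IsClosed ({z ∈ Metric.sphere (0 : EuclideanSpace ℝ (Fin d)) 1 | ∀ x ∈ A, m ≤ ⟪x, z⟫}) ∧
    GeodesicallyConvex ({z ∈ Metric.sphere (0 : EuclideanSpace ℝ (Fin d)) 1 | ∀ x ∈ A, m ≤ ⟪x, z⟫}) := by
  constructor
  · have : ({z ∈ Metric.sphere (0 : EuclideanSpace ℝ (Fin d)) 1 | ∀ x ∈ A, m ≤ ⟪x, z⟫})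
        = Metric.sphere 0 1 ∩ ⋂ x ∈ A, {z | m ≤ ⟪x, z⟫} := by
      ext z; simp [Set.mem_iInter]
    rw [this]
    exact (Metric.isClosed_sphere).inter <| isClosed_biInter fun x _ =>
      isClosed_le continuous_const (Continuous.inner continuous_const continuous_id)
  · refine ⟨fun z hz => hz.1, fun a ha b hb z hzs heq => ?_⟩
    refine ⟨hzs, fun x hx => ?_⟩
    exact cap_geod hm (mem_sphere_zero_iff_norm.mp ha.1) (mem_sphere_zero_iff_norm.mp hb.1)
      (mem_sphere_zero_iff_norm.mp hzs) (ha.2 x hx) (hb.2 x hx) heq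

/-- if `S` is a closed subset of the sphere with
`inf_{x,y ∈ S} ⟪x,y⟫ > √2/2`, then this infimum is unchanged by passing to the
geodesically convex hull of `S`. -/
theorem stmt6 {d : ℕ} (S : Set (EuclideanSpace ℝ (Fin d))) (hS : IsClosed S)
    (hsub : S ⊆ Metric.sphere 0 1) (hne : S.Nonempty)
    (hinf : Real.sqrt 2 / 2 < sInf {r | ∃ x ∈ S, ∃ y ∈ S, r = ⟪x, y⟫}) :
    sInf {r | ∃ x ∈ S, ∃ y ∈ S, r = ⟪x, y⟫}
      = sInf {r | ∃ x ∈ GeodConv S, ∃ y ∈ GeodConv S, r = ⟪x, y⟫} := by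
  set T : Set ℝ := {r | ∃ x ∈ S, ∃ y ∈ S, r = ⟪x, y⟫} with hT
  set m : ℝ := sInf T with hmdef
  have hm : 0 < m := lt_trans (by positivity) hinf
  obtain ⟨p, hp⟩ := hne
  have hTne : T.Nonempty := ⟨⟪p, p⟫, p, hp, p, hp, rfl⟩
  have hTbdd : BddBelow T := by
    refine ⟨-1, fun r hr => ?_⟩
    obtain ⟨x, hx, y, hy, rfl⟩ := hr
    have := abs_real_inner_le_norm x y
    rw [mem_sphere_zero_iff_norm.mp (hsub hx), mem_sphere_zero_iff_norm.mp (hsub hy)] at this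
    rw [one_mul] at this
    exact neg_le_of_abs_le this
  -- step 1: GeodConv S ⊆ C₁
  set C₁ : Set (EuclideanSpace ℝ (Fin d)) :=
    {z ∈ Metric.sphere 0 1 | ∀ x ∈ S, m ≤ ⟪x, z⟫} with hC₁
  have hC₁prop := caps_closed_convex S hm
  have hSC₁ : S ⊆ C₁ := fun s hs =>
    ⟨hsub hs, fun x hx => csInf_le hTbdd ⟨x, hx, s, hs, rfl⟩⟩
  have hhull₁ : GeodConv S ⊆ C₁ :=
    Set.sInter_subset_of_mem ⟨hC₁prop.1, hC₁prop.2, hSC₁⟩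
  -- step 2: GeodConv S ⊆ C₂
  set C₂ : Set (EuclideanSpace ℝ (Fin d)) :=
    {z ∈ Metric.sphere 0 1 | ∀ x ∈ GeodConv S, m ≤ ⟪x, z⟫} with hC₂
  have hC₂prop := caps_closed_convex (GeodConv S) hm
  have hSC₂ : S ⊆ C₂ := fun s hs =>
    ⟨hsub hs, fun x hx => by rw [real_inner_comm]; exact (hhull₁ hx).2 s hs⟩
  have hhull₂ : GeodConv S ⊆ C₂ :=
    Set.sInter_subset_of_mem ⟨hC₂prop.1, hC₂prop.2, hSC₂⟩
  -- conclude
  have hShull : S ⊆ GeodConv S := Set.subset_sInter fun C hC => hC.2.2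
  set T' : Set ℝ := {r | ∃ x ∈ GeodConv S, ∃ y ∈ GeodConv S, r = ⟪x, y⟫} with hT'
  have hTT' : T ⊆ T' := by
    rintro r ⟨x, hx, y, hy, rfl⟩
    exact ⟨x, hShull hx, y, hShull hy, rfl⟩
  have hT'lb : ∀ r ∈ T', m ≤ r := by
    rintro r ⟨x, hx, y, hy, rfl⟩
    exact (hhull₂ hy).2 x hx
  have h1 : m ≤ sInf T' := le_csInf (hTne.mono hTT') hT'lb
  have h2 : sInf T' ≤ sInf T := csInf_le_csInf ⟨m, hT'lb⟩ hTne hTT'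
  exact le_antisymm h1 h2
end

section
/- Let μ be a probability measure on S^{d-1}, M = ∫ y dμ(y), R = ‖M‖ > 0, U = M/R, and fix β ∈ (0, π/2). Then the mass of the antipodal cap is bounded: μ(S_β^−(U)) ≤ (1 − R)/(1 + cos β), where S_β^−(U) = {x ∈ S^{d-1} : ⟨x, −U⟩ ≥ cos β}. -/
open MeasureTheory
open scoped RealInnerProductSpace

/-!
Markov's inequality applied to `x ↦ 1 - ⟪U, x⟫`, which is nonnegative on the sphere and has mean
`1 - ⟪U, M⟫ = 1 - R`; on the antipodal cap it is at least `1 + cos β`.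
-/

section

variable {E : Type*} [NormedAddCommGroup E] [InnerProductSpace ℝ E]

lemma one_sub_inner_nonneg_of_norm_le_one {u x : E} (hu : ‖u‖ ≤ 1) (hx : ‖x‖ ≤ 1) :
    0 ≤ 1 - ⟪u, x⟫ := by
  have h := real_inner_le_norm u x
  nlinarith [norm_nonneg u, norm_nonneg x]

lemma norm_inv_norm_smul_le_one (v : E) : ‖‖v‖⁻¹ • v‖ ≤ 1 := by
  rw [norm_smul, norm_inv, norm_norm]
  exact inv_mul_le_one

lemma inner_inv_norm_smul_self (v : E) : ⟪‖v‖⁻¹ • v, v⟫ = ‖v‖ := by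
  rw [real_inner_smul_left, real_inner_self_eq_norm_mul_norm, ← mul_assoc, inv_mul_mul_self]

variable [CompleteSpace E] [MeasurableSpace E]

lemma measure_le_one_sub_inner_le {μ : Measure E} [IsProbabilityMeasure μ]
    (hball : ∀ᵐ x ∂μ, ‖x‖ ≤ 1) (hint : Integrable (fun x : E => x) μ) {u : E} (hu : ‖u‖ ≤ 1)
    {t : ℝ} (ht : 0 < t) :
    μ {x | t ≤ 1 - ⟪u, x⟫} ≤ ENNReal.ofReal ((1 - ⟪u, ∫ x, x ∂μ⟫) / t) := by
  have hinner : Integrable (fun x => ⟪u, x⟫) μ := (innerSL ℝ u).integrable_comp hint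
  have hnonneg : 0 ≤ᵐ[μ] fun x => 1 - ⟪u, x⟫ := by
    filter_upwards [hball] with x hx using one_sub_inner_nonneg_of_norm_le_one hu hx
  have hmean : ∫ x, (1 - ⟪u, x⟫) ∂μ = 1 - ⟪u, ∫ x, x ∂μ⟫ := by
    rw [integral_sub (integrable_const 1) hinner, integral_const, integral_inner hint]
    simp
  have hmarkov := mul_meas_ge_le_integral_of_nonneg hnonneg
    ((integrable_const 1).sub hinner) t
  rw [hmean] at hmarkov
  rw [← ofReal_measureReal, ENNReal.ofReal_le_ofReal_iff']
  exact Or.inl ((le_div_iff₀' ht).2 hmarkov)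

end

theorem stmt11_general {d : ℕ} (μ : Measure (EuclideanSpace ℝ (Fin d))) [IsProbabilityMeasure μ]
    (hsphere : μ {x | ‖x‖ ≠ 1} = 0)
    (hint : Integrable (fun y : EuclideanSpace ℝ (Fin d) => y) μ)
    (M : EuclideanSpace ℝ (Fin d)) (hM : M = ∫ y, y ∂μ)
    (R : ℝ) (hR : R = ‖M‖)
    (U : EuclideanSpace ℝ (Fin d)) (hU : U = R⁻¹ • M)
    (β : ℝ) (hβ : β ∈ Set.Ioo 0 (Real.pi / 2)) :
    μ {x | ‖x‖ = 1 ∧ Real.cos β ≤ ⟪x, -U⟫}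
      ≤ ENNReal.ofReal ((1 - R) / (1 + Real.cos β)) := by
  subst hU hR hM
  have hcos : 0 < Real.cos β :=
    Real.cos_pos_of_mem_Ioo ⟨by linarith [Real.pi_pos, hβ.1], hβ.2⟩
  have hball : ∀ᵐ x ∂μ, ‖x‖ ≤ 1 := by
    filter_upwards [measure_eq_zero_iff_ae_notMem.1 hsphere] with x hx
    exact (not_not.1 hx).le
  have hcap : {x | ‖x‖ = 1 ∧ Real.cos β ≤ ⟪x, -(‖∫ y, y ∂μ‖⁻¹ • ∫ y, y ∂μ)⟫}
      ⊆ {x | 1 + Real.cos β ≤ 1 - ⟪‖∫ y, y ∂μ‖⁻¹ • ∫ y, y ∂μ, x⟫} := by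
    rintro x ⟨-, hx⟩
    rw [inner_neg_right, real_inner_comm] at hx
    simp only [Set.mem_ofPred_eq]
    linarith
  calc _ ≤ _ := measure_mono hcap
    _ ≤ _ := measure_le_one_sub_inner_le hball hint (norm_inv_norm_smul_le_one _) (by linarith)
    _ = _ := by rw [inner_inv_norm_smul_self]

/-- for a probability measure `μ` on the unit sphere with mean `M`,
`R = ‖M‖ > 0`, `U = M/R`, and `β ∈ (0, π/2)`, the antipodal cap
`S_β^-(U) = {x ∈ S^{d-1} : ⟪x,-U⟫ ≥ cos β}` has mass at most `(1-R)/(1+cos β)`. -/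
theorem stmt11 {d : ℕ} (μ : Measure (EuclideanSpace ℝ (Fin d))) [IsProbabilityMeasure μ]
    (hsphere : μ {x | ‖x‖ ≠ 1} = 0)
    (hint : Integrable (fun y : EuclideanSpace ℝ (Fin d) => y) μ)
    (M : EuclideanSpace ℝ (Fin d)) (hM : M = ∫ y, y ∂μ)
    (R : ℝ) (hR : R = ‖M‖) (hRpos : 0 < R)
    (U : EuclideanSpace ℝ (Fin d)) (hU : U = R⁻¹ • M)
    (β : ℝ) (hβ : β ∈ Set.Ioo 0 (Real.pi / 2)) :
    μ {x | ‖x‖ = 1 ∧ Real.cos β ≤ ⟪x, -U⟫}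
      ≤ ENNReal.ofReal ((1 - R) / (1 + Real.cos β)) :=
  stmt11_general μ hsphere hint M hM R hR U hU β hβ
end

section
/- Let μ be a probability measure on S^{d-1} with mean M, R = ‖M‖, U = M/R (R > 0), and β ∈ (0, π/2). Then μ(S^{d-1} \ (S_β^+(U) ∪ S_β^−(U))) ≥ 1/2 − (R + (1+cos β)·μ(S_β^−(U)))/(2 cos β), where S_β^±(U) are the spherical caps of angle β around ±U. -/
/-!
Test the mean against the unit vector `U = M / ‖M‖`: `∫ ⟪y, U⟫ dμ = R`. On the sphere,
`⟪y, U⟫ ≥ c` on the cap around `U`, `≥ -1` on the cap around `-U`, and `> -c` on the band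
between them (`c = cos β`). Writing the mass of the first cap as one minus the other two
masses, this gives `R ≥ c - (1 + c) μ(S_β^-) - 2c μ(band)`, which rearranges to the claim.
-/

open MeasureTheory Set
open scoped RealInnerProductSpace

variable {E : Type*} [NormedAddCommGroup E] [InnerProductSpace ℝ E]

/-- `S_β^+(U) = sphereCap U (cos β)` and `S_β^-(U) = sphereCap (-U) (cos β)`. -/
def sphereCap (U : E) (c : ℝ) : Set E := {x | ‖x‖ = 1 ∧ c ≤ ⟪x, U⟫}

theorem isClosed_sphereCap (U : E) (c : ℝ) : IsClosed (sphereCap U c) :=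
  show IsClosed ({x : E | ‖x‖ = 1} ∩ {x | c ≤ ⟪x, U⟫}) from
    (isClosed_eq continuous_norm continuous_const).inter
      (isClosed_le continuous_const (continuous_id.inner continuous_const))

theorem integral_inner_normalize_mean [CompleteSpace E] {α : Type*} [MeasurableSpace α]
    {μ : Measure α} {f : α → E} (hf : Integrable f μ) :
    ∫ y, ⟪f y, ‖∫ y, f y ∂μ‖⁻¹ • ∫ y, f y ∂μ⟫ ∂μ = ‖∫ y, f y ∂μ‖ := by
  set M := ∫ y, f y ∂μ
  calc ∫ y, ⟪f y, ‖M‖⁻¹ • M⟫ ∂μ = ∫ y, ⟪‖M‖⁻¹ • M, f y⟫ ∂μ := by simp only [real_inner_comm]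
    _ = ⟪‖M‖⁻¹ • M, M⟫ := integral_inner hf _
    _ = ‖M‖ := by
      rw [real_inner_smul_left, real_inner_self_eq_norm_sq]
      rcases eq_or_ne ‖M‖ 0 with h | h
      · simp [h]
      · field_simp

theorem sub_indicator_le_inner {U x : E} {c : ℝ} (hU : ‖U‖ = 1) (hx : ‖x‖ = 1) :
    c - (1 + c) * (sphereCap (-U) c).indicator 1 x
        - 2 * c * ({x | ‖x‖ = 1} \ (sphereCap U c ∪ sphereCap (-U) c)).indicator 1 x
      ≤ ⟪x, U⟫ := by
  have hnorm : |⟪x, U⟫| ≤ 1 := by simpa [hx, hU] using abs_real_inner_le_norm x U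
  by_cases hB : x ∈ sphereCap (-U) c
  · have hE : x ∉ {x | ‖x‖ = 1} \ (sphereCap U c ∪ sphereCap (-U) c) := fun h => h.2 (.inr hB)
    simp only [indicator_of_mem hB, indicator_of_notMem hE, Pi.one_apply]
    linarith [(abs_le.mp hnorm).1]
  · have hB' : -c < ⟪x, U⟫ := by
      by_contra! h
      exact hB ⟨hx, by rw [inner_neg_right]; linarith⟩
    by_cases hA : x ∈ sphereCap U c
    · have hE : x ∉ {x | ‖x‖ = 1} \ (sphereCap U c ∪ sphereCap (-U) c) := fun h => h.2 (.inl hA)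
      simp only [indicator_of_notMem hB, indicator_of_notMem hE]
      simpa using hA.2
    · have hE : x ∈ {x | ‖x‖ = 1} \ (sphereCap U c ∪ sphereCap (-U) c) :=
        ⟨hx, by rintro (h | h) <;> contradiction⟩
      simp only [indicator_of_notMem hB, indicator_of_mem hE, Pi.one_apply]
      linarith

variable [MeasurableSpace E] [BorelSpace E]

theorem le_integral_inner_of_ae_norm_eq_one {μ : Measure E} [IsProbabilityMeasure μ]
    (hsphere : ∀ᵐ x ∂μ, ‖x‖ = 1) (hint : Integrable (fun y : E => y) μ) {U : E}
    (hU : ‖U‖ = 1) (c : ℝ) :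
    c - (1 + c) * μ.real (sphereCap (-U) c)
        - 2 * c * μ.real ({x | ‖x‖ = 1} \ (sphereCap U c ∪ sphereCap (-U) c))
      ≤ ∫ x, ⟪x, U⟫ ∂μ := by
  have hB := (isClosed_sphereCap (-U) c).measurableSet
  have hE : MeasurableSet ({x : E | ‖x‖ = 1} \ (sphereCap U c ∪ sphereCap (-U) c)) :=
    (isClosed_eq continuous_norm continuous_const).measurableSet.diff
      ((isClosed_sphereCap U c).measurableSet.union hB)
  have hBint := (integrable_const (μ := μ) (1 : ℝ)).indicator hB
  have hEint := (integrable_const (μ := μ) (1 : ℝ)).indicator hE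
  calc _ = ∫ x, c - (1 + c) * (sphereCap (-U) c).indicator 1 x
        - 2 * c * ({x | ‖x‖ = 1} \ (sphereCap U c ∪ sphereCap (-U) c)).indicator 1 x ∂μ := by
        rw [integral_sub, integral_sub, integral_const_mul, integral_const_mul,
          integral_indicator_one hB, integral_indicator_one hE]
        · simp
        all_goals fun_prop
    _ ≤ ∫ x, ⟪x, U⟫ ∂μ :=
        integral_mono_ae (by fun_prop) (hint.inner_const U)
          (hsphere.mono fun x hx => sub_indicator_le_inner hU hx)

/-- for a probability measure `μ` on the unit sphere with mean `M`,
`R = ‖M‖ > 0`, `U = M/R`, and `β ∈ (0, π/2)`, the equatorial band outside both caps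
`S_β^±(U)` has mass at least `1/2 − (R + (1+cos β)·μ(S_β^-(U)))/(2 cos β)`. -/
theorem stmt12 {d : ℕ} (μ : Measure (EuclideanSpace ℝ (Fin d))) [IsProbabilityMeasure μ]
    (hsphere : μ {x | ‖x‖ ≠ 1} = 0)
    (hint : Integrable (fun y : EuclideanSpace ℝ (Fin d) => y) μ)
    (M : EuclideanSpace ℝ (Fin d)) (hM : M = ∫ y, y ∂μ)
    (R : ℝ) (hR : R = ‖M‖) (hRpos : 0 < R)
    (U : EuclideanSpace ℝ (Fin d)) (hU : U = R⁻¹ • M)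
    (β : ℝ) (hβ : β ∈ Set.Ioo 0 (Real.pi / 2)) :
    ENNReal.ofReal (1 / 2 -
        (R + (1 + Real.cos β) *
          (μ {x | ‖x‖ = 1 ∧ Real.cos β ≤ ⟪x, -U⟫}).toReal) / (2 * Real.cos β))
      ≤ μ ({x | ‖x‖ = 1} \
            ({x | ‖x‖ = 1 ∧ Real.cos β ≤ ⟪x, U⟫} ∪ {x | ‖x‖ = 1 ∧ Real.cos β ≤ ⟪x, -U⟫})) := by
  have hcos : 0 < Real.cos β := Real.cos_pos_of_mem_Ioo ⟨by linarith [hβ.1, Real.pi_pos], hβ.2⟩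
  have hUnorm : ‖U‖ = 1 := by
    rw [hU, hR]
    exact norm_smul_inv_norm (norm_pos_iff.mp (hR ▸ hRpos))
  have hmean : ∫ x, ⟪x, U⟫ ∂μ = R := by
    rw [hU, hR, hM]
    exact integral_inner_normalize_mean hint
  have key := le_integral_inner_of_ae_norm_eq_one (measure_eq_zero_iff_ae_notMem.mp hsphere
    |>.mono fun x hx => not_not.mp hx) hint hUnorm (Real.cos β)
  rw [hmean, measureReal_def, measureReal_def] at key
  simp only [sphereCap] at key
  refine ENNReal.ofReal_le_of_le_toReal (sub_le_comm.mp ?_)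
  rw [le_div_iff₀ (by positivity)]
  linarith
end

section
/- Let μ be a probability measure on S^{d-1} supported in the cap S_α^+(U) = {x : ⟨x,U⟩ ≥ cos α} with α ∈ (0, π/2). For the Kuramoto vector field V(x) = ∫ P_x[y] dμ(y) = P_x[M] with M = ∫ y dμ, any x ∈ S_α^+(U) satisfies ⟨V(x), U⟩ = ∫ (⟨y,U⟩ − ⟨x,y⟩⟨x,U⟩) dμ(y) ≥ 0 whenever x minimizes z ↦ ⟨z,U⟩ over supp(μ). -/
open MeasureTheory
open scoped RealInnerProductSpace

/-- for a probability measure `μ` supported in the cap `S_α^+(U)`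
(`α ∈ (0,π/2)`), the Kuramoto vector field `V(x) = ∫ P_x[y] dμ(y)` satisfies
`⟪V(x₀), U⟫ = ∫ (⟪y,U⟫ − ⟪x₀,y⟫⟪x₀,U⟫) dμ(y) ≥ 0` at any point `x₀` of the cap
minimizing `z ↦ ⟪z,U⟫` over the support of `μ`. -/
theorem stmt13 {d : ℕ} (μ : Measure (EuclideanSpace ℝ (Fin d))) [IsProbabilityMeasure μ]
    (U : EuclideanSpace ℝ (Fin d)) (hU : ‖U‖ = 1)
    (α : ℝ) (hα : α ∈ Set.Ioo 0 (Real.pi / 2))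
    (hsupp : μ {y | ¬ (‖y‖ = 1 ∧ Real.cos α ≤ ⟪y, U⟫)} = 0)
    (hint : Integrable (fun y : EuclideanSpace ℝ (Fin d) => y) μ)
    (x₀ : EuclideanSpace ℝ (Fin d)) (hx₀ : ‖x₀‖ = 1) (hx₀cap : Real.cos α ≤ ⟪x₀, U⟫)
    (hmin : ∀ᵐ y ∂μ, ⟪x₀, U⟫ ≤ ⟪y, U⟫) :
    ⟪∫ y, (y - ⟪x₀, y⟫ • x₀) ∂μ, U⟫ = ∫ y, (⟪y, U⟫ - ⟪x₀, y⟫ * ⟪x₀, U⟫) ∂μ ∧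
    0 ≤ ∫ y, (⟪y, U⟫ - ⟪x₀, y⟫ * ⟪x₀, U⟫) ∂μ := by
  have hinner : Integrable (fun y : EuclideanSpace ℝ (Fin d) => ⟪x₀, y⟫) μ := by
    simpa using ((innerSL ℝ x₀).integrable_comp hint)
  have hf : Integrable (fun y : EuclideanSpace ℝ (Fin d) => y - ⟪x₀, y⟫ • x₀) μ :=
    hint.sub (hinner.smul_const x₀)
  constructor
  · rw [real_inner_comm, ← integral_inner hf]
    congr 1
    funext y
    simp only [inner_sub_right, real_inner_smul_right]
    rw [real_inner_comm U y, real_inner_comm U x₀]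
  · apply integral_nonneg_of_ae
    have hae : ∀ᵐ y ∂μ, ‖y‖ = 1 ∧ Real.cos α ≤ ⟪y, U⟫ := by
      rw [ae_iff]; exact hsupp
    filter_upwards [hmin, hae] with y hy hycap
    have h1 : ⟪x₀, y⟫ ≤ 1 := by
      calc ⟪x₀, y⟫ ≤ ‖x₀‖ * ‖y‖ := real_inner_le_norm x₀ y
      _ = 1 := by rw [hx₀, hycap.1]; ring
    have h2 : 0 ≤ ⟪x₀, U⟫ := le_trans (Real.cos_nonneg_of_mem_Icc
      ⟨by linarith [hα.1, Real.pi_pos], le_of_lt hα.2⟩) hx₀cap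
    show (0:ℝ) ≤ ⟪y, U⟫ - ⟪x₀, y⟫ * ⟪x₀, U⟫
    nlinarith [hy]
end

section
/- Consider the interaction energy E_β[μ] = (1/(2β)) ∬ exp(β⟨x,y⟩) dμ(x)dμ(y) on probability measures on S^{d-1} with β > 0. The family μ_ε = (1−ε)δ_u + ε δ_{−u} for u ∈ S^{d-1} and ε ∈ [0,1) satisfies: (i) each μ_ε is a critical point, i.e., the vector field X_{μ_ε,β}(x) = ∫ P_x[y] e^{β⟨x,y⟩} dμ_ε(y) vanishes μ_ε-almost everywhere; (ii) E_β[μ_ε] = (1/(2β))[((1−ε)² + ε²)e^β + 2ε(1−ε)e^{−β}], which is a non-constant function of ε; in particular E_β[μ_ε] ≠ E_β[δ_u] for ε ∈ (0,1). -/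
open MeasureTheory
open scoped RealInnerProductSpace

lemma integrable_dirac'' {α E} [MeasurableSpace α] [MeasurableSingletonClass α]
    [NormedAddCommGroup E] (p : α) (f : α → E) : Integrable f (Measure.dirac p) :=
  (integrable_const (f p)).congr (ae_eq_dirac f).symm

lemma integral_two_point {α E} [MeasurableSpace α] [MeasurableSingletonClass α]
    [NormedAddCommGroup E] [NormedSpace ℝ E] [CompleteSpace E] (a b : ℝ) (ha : 0 ≤ a) (hb : 0 ≤ b)
    (p q : α) (f : α → E) :
    ∫ x, f x ∂(ENNReal.ofReal a • Measure.dirac p + ENNReal.ofReal b • Measure.dirac q)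
      = a • f p + b • f q := by
  rw [integral_add_measure ((integrable_dirac'' p f).smul_measure ENNReal.ofReal_ne_top)
    ((integrable_dirac'' q f).smul_measure ENNReal.ofReal_ne_top),
    integral_smul_measure, integral_smul_measure, integral_dirac, integral_dirac,
    ENNReal.toReal_ofReal ha, ENNReal.toReal_ofReal hb]

/-- the two-point measures `μ_ε = (1−ε)δ_u + εδ_{−u}` are critical points of
the interaction energy `E_β`, their energy is
`(1/(2β))[((1−ε)²+ε²)e^β + 2ε(1−ε)e^{−β}]`, and for `ε ∈ (0,1)` this differs from
`E_β[δ_u]`; in particular the critical values of `E_β` are not locally discrete. -/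
theorem stmt17 {d : ℕ} (β : ℝ) (hβ : 0 < β)
    (u : EuclideanSpace ℝ (Fin d)) (hu : ‖u‖ = 1)
    (ε : ℝ) (hε : ε ∈ Set.Ico (0 : ℝ) 1)
    (με : Measure (EuclideanSpace ℝ (Fin d)))
    (hμε : με = ENNReal.ofReal (1 - ε) • Measure.dirac u
        + ENNReal.ofReal ε • Measure.dirac (-u)) :
    (∀ᵐ x ∂με, (∫ y, Real.exp (β * ⟪x, y⟫) • (y - ⟪x, y⟫ • x) ∂με) = 0) ∧
    (1 / (2 * β)) * ∫ x, ∫ y, Real.exp (β * ⟪x, y⟫) ∂με ∂με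
      = (1 / (2 * β)) * (((1 - ε) ^ 2 + ε ^ 2) * Real.exp β
          + 2 * ε * (1 - ε) * Real.exp (-β)) ∧
    (ε ∈ Set.Ioo (0 : ℝ) 1 →
      (1 / (2 * β)) * ∫ x, ∫ y, Real.exp (β * ⟪x, y⟫) ∂με ∂με
        ≠ (1 / (2 * β)) * ∫ x, ∫ y, Real.exp (β * ⟪x, y⟫)
            ∂(Measure.dirac u) ∂(Measure.dirac u)) := by
  obtain ⟨hε0, hε1⟩ := hε
  subst hμε
  have h1ε : (0:ℝ) ≤ 1 - ε := by linarith
  have huu : ⟪u, u⟫ = 1 := by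
    rw [real_inner_self_eq_norm_sq, hu]; norm_num
  have hun : ⟪u, -u⟫ = -1 := by rw [inner_neg_right, huu]
  have hnu : ⟪-u, u⟫ = -1 := by rw [inner_neg_left, huu]
  have hnn : ⟪-u, -u⟫ = 1 := by rw [inner_neg_neg, huu]
  -- key integral computations
  have key : ∀ x, (∫ y, Real.exp (β * ⟪x, y⟫) • (y - ⟪x, y⟫ • x) ∂(ENNReal.ofReal (1 - ε) • Measure.dirac u + ENNReal.ofReal ε • Measure.dirac (-u)))
      = (1 - ε) • (Real.exp (β * ⟪x, u⟫) • (u - ⟪x, u⟫ • x))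
        + ε • (Real.exp (β * ⟪x, -u⟫) • (-u - ⟪x, -u⟫ • x)) := fun x => by
    exact integral_two_point _ _ h1ε hε0 _ _ _
  constructor
  · rw [ae_iff]
    refine measure_mono_null (t := ({u, -u} : Set _)ᶜ) ?_ ?_
    · intro x hx
      simp only [Set.mem_setOf_eq] at hx
      simp only [Set.mem_compl_iff, Set.mem_insert_iff, Set.mem_singleton_iff]
      rintro (rfl | rfl) <;> apply hx <;> rw [key]
      · rw [huu, hun]; simp
      · rw [hnu, hnn]; simp
    · have hmem : u ∈ ({u, -u} : Set (EuclideanSpace ℝ (Fin d))) := by simp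
      have hmem' : -u ∈ ({u, -u} : Set (EuclideanSpace ℝ (Fin d))) := by simp
      simp [Measure.dirac_apply, Set.indicator_of_notMem, hmem, hmem']
  have inner_int : ∀ x, (∫ y, Real.exp (β * ⟪x, y⟫) ∂(ENNReal.ofReal (1 - ε) • Measure.dirac u + ENNReal.ofReal ε • Measure.dirac (-u)))
      = (1 - ε) * Real.exp (β * ⟪x, u⟫) + ε * Real.exp (β * ⟪x, -u⟫) := fun x => by
    simpa using integral_two_point (1 - ε) ε h1ε hε0 u (-u)
      (fun y => Real.exp (β * ⟪x, y⟫))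
  have energy : ∫ x, ∫ y, Real.exp (β * ⟪x, y⟫) ∂(ENNReal.ofReal (1 - ε) • Measure.dirac u + ENNReal.ofReal ε • Measure.dirac (-u)) ∂(ENNReal.ofReal (1 - ε) • Measure.dirac u + ENNReal.ofReal ε • Measure.dirac (-u))
      = ((1 - ε) ^ 2 + ε ^ 2) * Real.exp β + 2 * ε * (1 - ε) * Real.exp (-β) := by
    rw [integral_two_point (1 - ε) ε h1ε hε0 u (-u)
      (fun x => ∫ y, Real.exp (β * ⟪x, y⟫) ∂(ENNReal.ofReal (1 - ε) • Measure.dirac u + ENNReal.ofReal ε • Measure.dirac (-u))), inner_int, inner_int,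
      huu, hun, hnu, hnn]
    simp only [smul_eq_mul, mul_one, mul_neg_one]
    ring
  refine ⟨by rw [energy], fun hio => ?_⟩
  obtain ⟨hε0', hε1'⟩ := hio
  rw [energy, integral_dirac, integral_dirac, huu, mul_one]
  have hne : (1 / (2 * β)) ≠ 0 := by positivity
  have hlt : Real.exp (-β) < Real.exp β := Real.exp_lt_exp.2 (by linarith)
  intro h
  have := mul_left_cancel₀ hne h
  nlinarith [mul_pos hε0' (sub_pos.2 hε1')]
end
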